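/- arXiv:cs/0607082 — 4 statements merged into one kernel-verified Lean document; each statement's English description precedes it below -/
import Mathlib

section
/- A word w over {a,b} is good if and only if w = ε or there exist integers n, e, i, f with e ≥ 0, 0 ≤ i ≤ n, 0 ≤ f ≤ n, such that w = a^i(ba^n)^e b a^f or w = b^i(ab^n)^e a b^f, and moreover if e = 0 then n = max(i, f). -/
namespace ShuffleWqo

inductive AB : Type
  | a : AB
  | b : AB
  deriving DecidableEq

open AB

/-- The word `a^n`. -/
def wa (n : ℕ) : List AB := List.replicate n a

/-- The word `b^n`. -/
def wb (n : ℕ) : List AB := List.replicate n b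

/-- Concatenation power of a word: `npow u e = u^e`. -/
def npow (u : List AB) : ℕ → List AB
  | 0 => []
  | n + 1 => u ++ npow u n

/-- `Shuffle u v w` means `w` is a shuffle of `u` and `v`. -/
inductive Shuffle {α : Type*} : List α → List α → List α → Prop
  | nil : Shuffle [] [] []
  | left {x : α} {u v w : List α} : Shuffle u v w → Shuffle (x :: u) v (x :: w)
  | right {x : α} {u v w : List α} : Shuffle u v w → Shuffle u (x :: v) (x :: w)

/-- One derivation step: `w` is obtained from `v` by shuffling in a word of `I`. -/
def Derives {α : Type*} (I : Set (List α)) (v w : List α) : Prop :=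
  ∃ u ∈ I, Shuffle v u w

/-- The reflexive-transitive closure `⊢*_I`. -/
def DerivesStar {α : Type*} (I : Set (List α)) : List α → List α → Prop :=
  Relation.ReflTransGen (Derives I)

/-- The shuffle closure `LL(I)` of a set of words `I`. -/
def LL {α : Type*} (I : Set (List α)) : Set (List α) := { w | DerivesStar I [] w }

/-- `r` is a well quasi-order on the language `L`. -/
def IsWqoOn {α : Type*} (r : List α → List α → Prop) (L : Set (List α)) : Prop :=
  ∀ f : ℕ → List α, (∀ n, f n ∈ L) → ∃ i j, i < j ∧ r (f i) (f j)

/-- The exchange morphism on letters. -/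
def exch : AB → AB
  | a => b
  | b => a

/-- `w` has a factor of the form `a^k b^h` with `k, h ≥ 2`, or
`a^k b a^l b^m` with `k > l ≥ 1`, `m ≥ 1`. -/
def HasBadFactor (w : List AB) : Prop :=
  (∃ k h : ℕ, 2 ≤ k ∧ 2 ≤ h ∧ (wa k ++ wb h) <:+: w) ∨
  (∃ k l m : ℕ, 1 ≤ l ∧ l < k ∧ 1 ≤ m ∧ (wa k ++ [b] ++ wa l ++ wb m) <:+: w)

/-- A word is bad if one of `w`, `w̃`, `E(w)`, `E(w̃)` has a bad factor. -/
def BadWord (w : List AB) : Prop :=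
  HasBadFactor w ∨ HasBadFactor w.reverse ∨
  HasBadFactor (w.map exch) ∨ HasBadFactor ((w.map exch).reverse)

/-- A word is good if it is not bad. -/
def GoodWord (w : List AB) : Prop := ¬ BadWord w


/-! basic lemmas -/

@[simp] lemma exch_exch (x : AB) : exch (exch x) = x := by cases x <;> rfl

@[simp] lemma map_exch_exch (w : List AB) : (w.map exch).map exch = w := by
  simp [List.map_map, Function.comp_def]

@[simp] lemma wa_reverse (n : ℕ) : (wa n).reverse = wa n := by simp [wa]
@[simp] lemma wb_reverse (n : ℕ) : (wb n).reverse = wb n := by simp [wb]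
@[simp] lemma wa_map_exch (n : ℕ) : (wa n).map exch = wb n := by
  rw [wa, List.map_replicate]; rfl
@[simp] lemma wb_map_exch (n : ℕ) : (wb n).map exch = wa n := by
  rw [wb, List.map_replicate]; rfl

lemma wa_add (m n : ℕ) : wa (m + n) = wa m ++ wa n := by
  simp only [wa, List.replicate_add]

lemma wb_add (m n : ℕ) : wb (m + n) = wb m ++ wb n := by
  simp only [wb, List.replicate_add]

lemma npow_succ_def (u : List AB) (e : ℕ) : npow u (e + 1) = u ++ npow u e := rfl

lemma npow_succ' (u : List AB) (e : ℕ) : npow u (e + 1) = npow u e ++ u := by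
  induction e with
  | zero => simp [npow]
  | succ e ih =>
    rw [npow_succ_def, ih, ← List.append_assoc, ← npow_succ_def, ih]

lemma hbf_mono {u w : List AB} (h : u <:+: w) : HasBadFactor u → HasBadFactor w := by
  rintro (⟨k, hh, h1, h2, h3⟩ | ⟨k, l, m, h1, h2, h3, h4⟩)
  · exact Or.inl ⟨k, hh, h1, h2, h3.trans h⟩
  · exact Or.inr ⟨k, l, m, h1, h2, h3, h4.trans h⟩

lemma bad_mono {u w : List AB} (h : u <:+: w) : BadWord u → BadWord w := by
  rintro (h1 | h1 | h1 | h1)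
  · exact Or.inl (hbf_mono h h1)
  · exact Or.inr (Or.inl (hbf_mono (List.reverse_infix.mpr h) h1))
  · exact Or.inr (Or.inr (Or.inl (hbf_mono (h.map exch) h1)))
  · exact Or.inr (Or.inr (Or.inr (hbf_mono (List.reverse_infix.mpr (h.map exch)) h1)))

lemma good_infix {u w : List AB} (h : u <:+: w) (hg : GoodWord w) : GoodWord u :=
  fun hb => hg (bad_mono h hb)

lemma bad_exch {w : List AB} (h : BadWord (w.map exch)) : BadWord w := by
  rcases h with h1 | h1 | h1 | h1
  · exact Or.inr (Or.inr (Or.inl h1))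
  · exact Or.inr (Or.inr (Or.inr h1))
  · rw [map_exch_exch] at h1; exact Or.inl h1
  · rw [map_exch_exch] at h1; exact Or.inr (Or.inl h1)

lemma good_exch {w : List AB} (h : GoodWord w) : GoodWord (w.map exch) := by
  intro hb; exact h (bad_exch hb)

lemma hbf_mem_b {w : List AB} (h : HasBadFactor w) : b ∈ w := by
  rcases h with ⟨k, hh, h1, h2, h3⟩ | ⟨k, l, m, h1, h2, h3, h4⟩
  · exact h3.subset (List.mem_append.mpr (Or.inr (List.mem_replicate.mpr ⟨by omega, rfl⟩)))
  · exact h4.subset (by simp)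

lemma hbf_mem_a {w : List AB} (h : HasBadFactor w) : a ∈ w := by
  rcases h with ⟨k, hh, h1, h2, h3⟩ | ⟨k, l, m, h1, h2, h3, h4⟩
  · exact h3.subset (List.mem_append.mpr (Or.inl (List.mem_replicate.mpr ⟨by omega, rfl⟩)))
  · refine h4.subset ?_
    simp only [List.append_assoc, List.mem_append]
    exact Or.inl (List.mem_replicate.mpr ⟨by omega, rfl⟩)

lemma not_b_mem_wa (m : ℕ) : b ∉ wa m := fun h =>
  absurd (List.eq_of_mem_replicate h) (by decide)

lemma not_a_mem_wb (m : ℕ) : a ∉ wb m := fun h =>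
  absurd (List.eq_of_mem_replicate h) (by decide)

lemma good_wa (m : ℕ) : GoodWord (wa m) := by
  rintro (h | h | h | h)
  · exact not_b_mem_wa m (hbf_mem_b h)
  · rw [wa_reverse] at h; exact not_b_mem_wa m (hbf_mem_b h)
  · rw [wa_map_exch] at h; exact not_a_mem_wb m (hbf_mem_a h)
  · rw [wa_map_exch, wb_reverse] at h; exact not_a_mem_wb m (hbf_mem_a h)

lemma good_wb (m : ℕ) : GoodWord (wb m) := by
  have := good_exch (good_wa m)
  rwa [wa_map_exch] at this


/-! the normal form F -/

def F (n e i f : ℕ) : List AB := wa i ++ npow ([b] ++ wa n) e ++ [b] ++ wa f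

lemma wa_succ (n : ℕ) : wa (n + 1) = a :: wa n := rfl

lemma F_zero (n i f : ℕ) : F n 0 i f = wa i ++ [b] ++ wa f := by
  simp [F, npow]

lemma F_succ (n e i f : ℕ) : F n (e + 1) i f = wa i ++ [b] ++ F n e n f := by
  simp [F, npow_succ_def, List.append_assoc]

lemma F_head (n e i f : ℕ) : ∃ X, F n e i f = wa i ++ [b] ++ X := by
  cases e with
  | zero => exact ⟨wa f, by rw [F_zero]⟩
  | succ e => exact ⟨F n e n f, by rw [F_succ]⟩

lemma F_reverse (n e i f : ℕ) : (F n e i f).reverse = F n e f i := by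
  induction e generalizing i f with
  | zero => simp [F_zero, List.reverse_append]
  | succ e ih =>
    rw [F_succ]
    simp only [List.reverse_append, wa_reverse, List.reverse_cons, List.reverse_nil,
      List.reverse_singleton, ih, List.nil_append]
    simp only [F, npow_succ', List.append_assoc]

lemma npow_map_exch (u : List AB) (e : ℕ) :
    (npow u e).map exch = npow (u.map exch) e := by
  induction e with
  | zero => simp [npow]
  | succ e ih => rw [npow_succ_def, npow_succ_def, List.map_append, ih]

lemma F_map_exch (n e i f : ℕ) :
    (F n e i f).map exch = wb i ++ npow ([a] ++ wb n) e ++ [a] ++ wb f := by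
  simp only [F, List.map_append, npow_map_exch, wa_map_exch]
  rfl

/-! infix splitting -/

lemma infix_split {α : Type*} {u l₁ l₂ : List α} (h : u <:+: l₁ ++ l₂) :
    u <:+: l₁ ∨ u <:+: l₂ ∨
      ∃ s p, s <:+ l₁ ∧ p <+: l₂ ∧ s ≠ [] ∧ p ≠ [] ∧ u = s ++ p := by
  obtain ⟨x, y, hxy⟩ := h
  rcases List.append_eq_append_iff.mp
      (show x ++ (u ++ y) = l₁ ++ l₂ by simpa [List.append_assoc] using hxy) with
    ⟨a', h1, h2⟩ | ⟨c', h1, h2⟩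
  · rcases List.append_eq_append_iff.mp h2 with ⟨m, hm1, hm2⟩ | ⟨m, hm1, hm2⟩
    · left; exact ⟨x, m, by rw [h1, hm1]; simp [List.append_assoc]⟩
    · rcases eq_or_ne a' [] with rfl | ha
      · right; left
        refine ⟨[], y, ?_⟩
        simp only [List.nil_append] at hm1
        rw [hm2, hm1]
        simp
      · rcases eq_or_ne m [] with rfl | hm
        · left
          refine ⟨x, [], ?_⟩
          rw [List.append_nil] at hm1
          rw [h1, hm1]
          simp
        · right; right
          exact ⟨a', m, ⟨x, h1.symm⟩, ⟨y, hm2.symm⟩, ha, hm, hm1⟩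
  · right; left
    exact ⟨c', y, by rw [h2, List.append_assoc]⟩

lemma infix_wa {s : List AB} {i : ℕ} (h : s <:+: wa i) :
    s = wa s.length ∧ s.length ≤ i := by
  constructor
  · exact List.eq_replicate_iff.mpr ⟨rfl, fun x hx => List.eq_of_mem_replicate (h.subset hx)⟩
  · have := h.sublist.length_le
    simpa [wa] using this

lemma suffix_singleton {α : Type*} {s : List α} {x : α} (h : s <:+ [x]) (hs : s ≠ []) :
    s = [x] := by
  have h1 := h.sublist
  have h2 : s.length = 1 := by
    have hle := h1.length_le
    cases s with
    | nil => exact absurd rfl hs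
    | cons y s' =>
      have hle' : s'.length + 1 ≤ 1 := by simpa using hle
      have : s'.length = 0 := by omega
      simp [this]
  exact h1.eq_of_length (by simpa using h2)

lemma wa_b_cancel {j k : ℕ} {p q : List AB} (h : wa j ++ b :: p = wa k ++ b :: q) :
    j = k ∧ p = q := by
  induction j generalizing k with
  | zero =>
    cases k with
    | zero => simpa [wa] using h
    | succ k => rw [wa_succ] at h; simp [wa] at h
  | succ j ih =>
    cases k with
    | zero => rw [wa_succ] at h; simp [wa] at h
    | succ k =>
      rw [wa_succ, wa_succ] at h
      simp only [List.cons_append, List.cons.injEq, true_and] at h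
      obtain ⟨h1, h2⟩ := ih h
      exact ⟨by omega, h2⟩

lemma prefix_run {l n : ℕ} {r X : List AB} (h : (wa l ++ b :: r) <+: (wa n ++ b :: X)) :
    l = n ∧ r <+: X := by
  induction l generalizing n with
  | zero =>
    cases n with
    | zero =>
      refine ⟨rfl, ?_⟩
      have : (b :: r) <+: (b :: X) := by simpa [wa] using h
      exact (List.cons_prefix_cons.mp this).2
    | succ n =>
      exfalso
      rw [wa_succ] at h
      have : (b :: r) <+: (a :: (wa n ++ b :: X)) := by simpa [wa] using h
      exact absurd (List.cons_prefix_cons.mp this).1 (by decide)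
  | succ l ih =>
    cases n with
    | zero =>
      exfalso
      rw [wa_succ] at h
      have : (a :: (wa l ++ b :: r)) <+: (b :: X) := by simpa [wa] using h
      exact absurd (List.cons_prefix_cons.mp this).1 (by decide)
    | succ n =>
      rw [wa_succ, wa_succ] at h
      simp only [List.cons_append, List.cons_prefix_cons, true_and] at h
      obtain ⟨h1, h2⟩ := ih h
      exact ⟨by omega, h2⟩

/-! no bad factors in F -/

lemma count_b_F_zero (n i f : ℕ) : List.count b (F n 0 i f) = 1 := by
  simp [F_zero, wa, List.count_append, List.count_replicate]

lemma head_a_of_suffix_wa {s : List AB} {i : ℕ} (hs : s <:+ wa i) (hsne : s ≠ []) :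
    ∃ s', s = a :: s' := by
  obtain ⟨hsl, _⟩ := infix_wa hs.isInfix
  cases s with
  | nil => exact absurd rfl hsne
  | cons x s' =>
    refine ⟨s', ?_⟩
    rw [show (x :: s').length = s'.length + 1 from rfl, wa_succ] at hsl
    injection hsl with h1 h2
    rw [h1]

lemma no_bb {n : ℕ} (hn : 1 ≤ n) : ∀ e i f, ¬ ([b, b] <:+: F n e i f) := by
  intro e
  induction e with
  | zero =>
    intro i f h
    have := h.sublist.count_le b
    rw [count_b_F_zero] at this
    simp at this
  | succ e ih =>
    intro i f h
    rw [F_succ] at h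
    rcases infix_split (l₁ := wa i) (l₂ := [b] ++ F n e n f)
        (by simpa only [List.append_assoc] using h) with
      h1 | h1 | ⟨s, p, hs, hp, hsne, hpne, heq⟩
    · exact not_b_mem_wa i (h1.subset (by simp))
    · rcases infix_split (l₁ := ([b] : List AB)) (l₂ := F n e n f) h1 with
        h2 | h2 | ⟨s, p, hs, hp, hsne, hpne, heq⟩
      · have := h2.sublist.length_le; simp at this
      · exact ih n f h2
      · have hs' : s = [b] := suffix_singleton hs hsne
        subst hs'
        have hp' : p = [b] := by
          rw [List.singleton_append] at heq
          injection heq with h1' h2'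
          exact h2'.symm
        subst hp'
        obtain ⟨X, hX⟩ := F_head n e n f
        rw [hX] at hp
        obtain ⟨m, rfl⟩ : ∃ m, n = m + 1 := ⟨n - 1, by omega⟩
        rw [wa_succ] at hp
        have : ([b] : List AB) <+: (a :: (wa m ++ [b] ++ X)) := by
          simpa [List.append_assoc] using hp
        exact absurd (List.cons_prefix_cons.mp this).1 (by decide)
    · obtain ⟨s', rfl⟩ := head_a_of_suffix_wa hs hsne
      simp at heq
lemma no_pat {n : ℕ} : ∀ e i f k l, i ≤ n → 1 ≤ l → l < k →
    ¬ ((wa k ++ [b] ++ wa l ++ [b]) <:+: F n e i f) := by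
  intro e
  induction e with
  | zero =>
    intro i f k l hi hl hk h
    have := h.sublist.count_le b
    rw [count_b_F_zero] at this
    simp [wa, List.count_append, List.count_replicate] at this
  | succ e ih =>
    intro i f k l hi hl hk h
    have hk1 : 1 ≤ k := by omega
    rw [F_succ] at h
    rcases infix_split (l₁ := wa i) (l₂ := [b] ++ F n e n f)
        (by simpa only [List.append_assoc] using h) with
      h1 | h1 | ⟨s, p, hs, hp, hsne, hpne, heq⟩
    · refine not_b_mem_wa i (h1.subset ?_)
      simp only [List.append_assoc, List.mem_append]
      right; left; simp
    · rcases infix_split (l₁ := ([b] : List AB)) (l₂ := F n e n f) h1 with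
        h2 | h2 | ⟨s, p, hs, hp, hsne, hpne, heq⟩
      · have := h2.sublist.length_le
        simp [wa] at this
        omega
      · exact ih n f k l le_rfl hl hk (by simpa only [List.append_assoc] using h2)
      · have hs' : s = [b] := suffix_singleton hs hsne
        subst hs'
        obtain ⟨m, rfl⟩ : ∃ m, k = m + 1 := ⟨k - 1, by omega⟩
        rw [wa_succ] at heq
        simp [List.append_assoc] at heq
    · -- crossing at wa i
      obtain ⟨hsl, hslen⟩ := infix_wa hs.isInfix
      obtain ⟨X, hX⟩ := F_head n e n f
      rw [hX] at hp
      obtain ⟨p', rfl⟩ : ∃ p', p = b :: p' := by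
        cases p with
        | nil => exact absurd rfl hpne
        | cons x p'' =>
          have : (x :: p'') <+: (b :: (wa n ++ [b] ++ X)) := by
            simpa [List.append_assoc] using hp
          exact ⟨p'', by rw [(List.cons_prefix_cons.mp this).1]⟩
      rw [hsl] at heq
      have heq' : wa k ++ b :: (wa l ++ [b]) = wa s.length ++ b :: p' := by
        simpa [List.append_assoc] using heq
      obtain ⟨hjk, hpp⟩ := wa_b_cancel heq'
      rw [← hpp] at hp
      have hp2 : (wa l ++ b :: ([] : List AB)) <+: (wa n ++ b :: X) := by
        have : (b :: (wa l ++ [b])) <+: (b :: (wa n ++ b :: X)) := by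
          simpa [List.append_assoc] using hp
        have := (List.cons_prefix_cons.mp this).2
        simpa [List.append_assoc] using this
      have hln : l = n := (prefix_run hp2).1
      omega

lemma hbf_cases {v : List AB} (h : HasBadFactor v) :
    ([b, b] <:+: v) ∨ ∃ l, 1 ≤ l ∧ (wa (l + 1) ++ [b] ++ wa l ++ [b]) <:+: v := by
  rcases h with ⟨k, hh, h1, h2, h3⟩ | ⟨k, l, m, h1, h2, h3, h4⟩
  · left
    refine List.IsInfix.trans ?_ h3
    refine ⟨wa k, wb (hh - 2), ?_⟩
    have hwb : wb hh = wb 2 ++ wb (hh - 2) := by rw [← wb_add]; congr 1; omega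
    rw [hwb]
    have : ([b, b] : List AB) = wb 2 := rfl
    rw [this, List.append_assoc]
  · right
    refine ⟨l, h1, List.IsInfix.trans ?_ h4⟩
    refine ⟨wa (k - (l + 1)), wb (m - 1), ?_⟩
    have hk : wa k = wa (k - (l + 1)) ++ wa (l + 1) := by rw [← wa_add]; congr 1; omega
    have hm : wb m = [b] ++ wb (m - 1) := by
      have h5 : wb m = wb 1 ++ wb (m - 1) := by rw [← wb_add]; congr 1; omega
      rw [h5]; rfl
    rw [hk, hm]
    simp [List.append_assoc]

lemma hbf_aa {v : List AB} (h : HasBadFactor v) : [a, a] <:+: v := by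
  have haa : ∀ k : ℕ, 2 ≤ k → ([a, a] : List AB) <+: wa k := by
    intro k hk
    have h5 : wa k = wa 2 ++ wa (k - 2) := by rw [← wa_add]; congr 1; omega
    rw [h5]
    exact ⟨wa (k - 2), rfl⟩
  rcases h with ⟨k, hh, h1, h2, h3⟩ | ⟨k, l, m, h1, h2, h3, h4⟩
  · exact ((haa k h1).isInfix.trans ⟨[], wb hh, by simp⟩).trans h3
  · refine (((haa k (by omega)).isInfix.trans ?_).trans h4)
    exact ⟨[], [b] ++ wa l ++ wb m, by simp [List.append_assoc]⟩

lemma no_hbf_F {n e i f : ℕ} (hn : 1 ≤ n) (hi : i ≤ n) :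
    ¬ HasBadFactor (F n e i f) := by
  intro h
  rcases hbf_cases h with h1 | ⟨l, hl, h1⟩
  · exact no_bb hn e i f h1
  · exact no_pat e i f (l + 1) l hi hl (by omega) h1

lemma good_F {n e i f : ℕ} (hn : 1 ≤ n) (hi : i ≤ n) (hf : f ≤ n) :
    GoodWord (F n e i f) := by
  rintro (h | h | h | h)
  · exact no_hbf_F hn hi h
  · rw [F_reverse] at h
    exact no_hbf_F hn hf h
  · have h2 := (hbf_aa h).map exch
    rw [map_exch_exch] at h2
    exact no_bb hn e i f h2
  · have h1 : [a, a] <:+: (F n e i f).map exch := by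
      have h0 := hbf_aa h
      rw [show ([a, a] : List AB) = ([a, a] : List AB).reverse from rfl] at h0
      exact List.reverse_infix.mp h0
    have h2 := h1.map exch
    rw [map_exch_exch] at h2
    exact no_bb hn e i f h2


/-! words containing both aa and bb are bad -/

lemma bad_of_aabb {w : List AB} (h : ([a, a, b, b] : List AB) <:+: w) : BadWord w :=
  Or.inl (Or.inl ⟨2, 2, le_rfl, le_rfl, (show wa 2 ++ wb 2 = [a, a, b, b] from rfl) ▸ h⟩)

lemma bad_of_aabab {w : List AB} (h : ([a, a, b, a, b] : List AB) <:+: w) : BadWord w :=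
  Or.inl (Or.inr ⟨2, 1, 1, le_rfl, by omega, le_rfl,
    (show wa 2 ++ [b] ++ wa 1 ++ wb 1 = [a, a, b, a, b] from rfl) ▸ h⟩)

lemma badC : ∀ (N : ℕ) (s : List AB), s.length ≤ N →
    BadWord ([a, a] ++ s ++ [b, b]) ∧ BadWord ([a, a, b] ++ s ++ [b, b]) := by
  intro N
  induction N with
  | zero =>
    intro s hs
    have : s = [] := List.length_eq_zero_iff.mp (by omega)
    subst this
    constructor
    · exact bad_of_aabb ⟨[], [], by rfl⟩
    · exact bad_of_aabb ⟨[], [b], by rfl⟩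
  | succ N ihN =>
    intro s hs
    match s with
    | [] =>
      constructor
      · exact bad_of_aabb ⟨[], [], by rfl⟩
      · exact bad_of_aabb ⟨[], [b], by rfl⟩
    | AB.a :: s' =>
      constructor
      · have := (ihN s' (by simpa using hs)).1
        refine bad_mono ⟨[a], [], ?_⟩ this
        simp
      · match s' with
        | [] => exact bad_of_aabab ⟨[], [b], by rfl⟩
        | AB.b :: s'' =>
          exact bad_of_aabab ⟨[], s'' ++ [b, b], by simp⟩
        | AB.a :: s'' =>
          have := (ihN s'' (by simp at hs ⊢; omega)).1
          refine bad_mono ⟨[a, a, b], [], ?_⟩ this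
          simp
    | AB.b :: s' =>
      constructor
      · have := (ihN s' (by simpa using hs)).2
        refine bad_mono (List.infix_rfl.trans ?_) this
        exact ⟨[], [], by simp⟩
      · have h := bad_of_aabb (w := [a, a, b, b] ++ (s' ++ [b, b])) ⟨[], s' ++ [b, b], by simp⟩
        refine bad_mono ?_ h
        refine ⟨[], [], by simp⟩

lemma badC1 (s : List AB) : BadWord ([a, a] ++ s ++ [b, b]) :=
  (badC s.length s le_rfl).1

lemma both_bad : ∀ w : List AB, [a, a] <:+: w → [b, b] <:+: w → BadWord w := by
  intro w
  induction w with
  | nil => intro h; simp [List.infix_nil] at h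
  | cons c w' ih =>
    intro haa hbb
    rcases List.infix_cons_iff.mp haa with hpre | haa'
    · obtain ⟨r, hr⟩ := hpre
      have hbbr : [b, b] <:+: r := by
        rw [← hr] at hbb
        rcases List.infix_cons_iff.mp hbb with h1 | h1
        · exact absurd (List.cons_prefix_cons.mp h1).1 (by decide)
        · rcases List.infix_cons_iff.mp h1 with h2 | h2
          · exact absurd (List.cons_prefix_cons.mp h2).1 (by decide)
          · exact h2
      obtain ⟨x, y, hxy⟩ := hbbr
      have hw : c :: w' = ([a, a] ++ x ++ [b, b]) ++ y := by
        rw [← hr, ← hxy]; simp [List.append_assoc]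
      exact bad_mono (u := [a, a] ++ x ++ [b, b])
        ⟨[], y, by rw [hw]; simp [List.append_assoc]⟩ (badC1 x)
    · rcases List.infix_cons_iff.mp hbb with hpre | hbb'
      · obtain ⟨r, hr⟩ := hpre
        have haar : [a, a] <:+: r := by
          rw [← hr] at haa
          rcases List.infix_cons_iff.mp haa with h1 | h1
          · exact absurd (List.cons_prefix_cons.mp h1).1 (by decide)
          · rcases List.infix_cons_iff.mp h1 with h2 | h2
            · exact absurd (List.cons_prefix_cons.mp h2).1 (by decide)
            · exact h2
        obtain ⟨x, y, hxy⟩ := haar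
        have hw : c :: w' = ([b, b] ++ x ++ [a, a]) ++ y := by
          rw [← hr, ← hxy]; simp [List.append_assoc]
        refine bad_mono (u := [b, b] ++ x ++ [a, a])
          ⟨[], y, by rw [hw]; simp [List.append_assoc]⟩ ?_
        apply bad_exch
        have hmap : ([b, b] ++ x ++ [a, a]).map exch
            = [a, a] ++ x.map exch ++ [b, b] := by
          simp
          exact ⟨rfl, rfl⟩
        rw [hmap]
        exact badC1 (x.map exch)
      · exact bad_mono (List.suffix_cons c w').isInfix (ih haa' hbb')

/-! decomposition lemmas -/

lemma exists_first_b {w : List AB} (h : b ∈ w) : ∃ i t, w = wa i ++ [b] ++ t := by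
  induction w with
  | nil => simp at h
  | cons c w' ih =>
    cases c with
    | a =>
      have hb : b ∈ w' := by
        rcases List.mem_cons.mp h with h1 | h1
        · exact absurd h1 (by decide)
        · exact h1
      obtain ⟨i, t, ht⟩ := ih hb
      exact ⟨i + 1, t, by rw [wa_succ]; simp [ht]⟩
    | b => exact ⟨0, w', by simp [wa]⟩

lemma eq_wa_of_not_b {w : List AB} (h : b ∉ w) : w = wa w.length := by
  refine List.eq_replicate_iff.mpr ⟨rfl, fun x hx => ?_⟩
  cases x with
  | a => rfl
  | b => exact absurd hx h

lemma eq_wb_of_not_a {w : List AB} (h : a ∉ w) : w = wb w.length := by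
  refine List.eq_replicate_iff.mpr ⟨rfl, fun x hx => ?_⟩
  cases x with
  | a => exact absurd hx h
  | b => rfl

lemma F_zero_n (e : ℕ) : F 0 e 0 0 = wb (e + 1) := by
  induction e with
  | zero =>
    show wa 0 ++ npow ([b] ++ wa 0) 0 ++ [b] ++ wa 0 = wb 1
    simp [wa, wb, npow]
  | succ e ih =>
    rw [F_succ, ih]
    rfl

/-! Lemma A: structure of good bb-free words containing b -/

lemma lemA : ∀ (N : ℕ) (w : List AB), w.length ≤ N → GoodWord w → b ∈ w →
    ¬ ([b, b] <:+: w) →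
    ∃ n e i f, i ≤ n ∧ f ≤ n ∧ (e = 0 → n = max i f) ∧ w = F n e i f := by
  intro N
  induction N with
  | zero =>
    intro w hlen hg hb hbb
    have : w = [] := List.length_eq_zero_iff.mp (by omega)
    subst this
    simp at hb
  | succ N ih =>
    intro w hlen hg hb hbb
    obtain ⟨i, t, rfl⟩ := exists_first_b hb
    by_cases hbt : b ∈ t
    · have ht_len : t.length ≤ N := by
        simp [wa] at hlen; omega
      have htinf : t <:+: wa i ++ [b] ++ t := ⟨wa i ++ [b], [], by simp⟩
      have htg : GoodWord t := good_infix htinf hg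
      have htbb : ¬ [b, b] <:+: t := fun h => hbb (h.trans htinf)
      obtain ⟨n', e', i', f', hi', hf', hmax, ht⟩ := ih t ht_len htg hbt htbb
      obtain ⟨X, hX⟩ := F_head n' e' i' f'
      have hi'pos : 1 ≤ i' := by
        by_contra h0
        have hz : i' = 0 := by omega
        apply hbb
        refine ⟨wa i, X, ?_⟩
        rw [ht, hX, hz]
        simp [wa, List.append_assoc]
      have hii' : i ≤ i' := by
        by_contra hgt
        push_neg at hgt
        apply hg
        left; right
        refine ⟨i, i', 1, hi'pos, hgt, le_rfl, ⟨[], X, ?_⟩⟩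
        rw [ht, hX]
        show ([] : List AB) ++ (wa i ++ [b] ++ wa i' ++ wb 1) ++ X = _
        simp [wb, List.append_assoc]
      cases e' with
      | zero =>
        have ht0 : F n' 0 i' f' = wa i' ++ [b] ++ wa f' := F_zero n' i' f'
        have hff : f' ≤ i' := by
          by_contra hgt
          push_neg at hgt
          apply hg
          right; left; right
          refine ⟨f', i', 1, hi'pos, hgt, le_rfl, ?_⟩
          have hrev : (wa i ++ [b] ++ t).reverse
              = wa f' ++ [b] ++ wa i' ++ [b] ++ wa i := by
            rw [ht, ht0]
            simp [List.reverse_append, List.append_assoc]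
          rw [hrev]
          refine ⟨[], wa i, ?_⟩
          show ([] : List AB) ++ (wa f' ++ [b] ++ wa i' ++ wb 1) ++ wa i = _
          simp [wb, List.append_assoc]
        refine ⟨i', 1, i, f', hii', hff, fun h => absurd h one_ne_zero, ?_⟩
        rw [ht, ht0, F_succ, F_zero]
      | succ e'' =>
        obtain ⟨Y, hY⟩ := F_head n' e'' n' f'
        have hti : t = wa i' ++ [b] ++ (wa n' ++ [b] ++ Y) := by
          rw [ht, F_succ, hY]
        have hn'i' : n' ≤ i' := by
          by_contra hgt
          push_neg at hgt
          apply hg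
          right; left; right
          refine ⟨n', i', 1, hi'pos, hgt, le_rfl, ?_⟩
          have hrev : (wa i ++ [b] ++ t).reverse
              = Y.reverse ++ ([b] ++ (wa n' ++ [b] ++ wa i' ++ [b] ++ wa i)) := by
            rw [hti]
            simp [List.reverse_append, List.append_assoc]
          rw [hrev]
          refine ⟨Y.reverse ++ [b], wa i, ?_⟩
          show _ ++ (wa n' ++ [b] ++ wa i' ++ wb 1) ++ _ = _
          simp [wb, List.append_assoc]
        have heqn : i' = n' := le_antisymm hi' hn'i'
        subst heqn
        refine ⟨i', e'' + 2, i, f', hii', hf', fun h => by omega, ?_⟩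
        rw [ht, F_succ (e := e'' + 1)]
    · have htw : t = wa t.length := eq_wa_of_not_b hbt
      refine ⟨max i t.length, 0, i, t.length, le_max_left _ _, le_max_right _ _,
        fun _ => rfl, ?_⟩
      rw [F_zero, ← htw]


lemma good_nil : GoodWord ([] : List AB) := by
  rintro (h | h | h | h)
  · exact absurd (hbf_mem_b h) (by simp)
  · rw [List.reverse_nil] at h; exact absurd (hbf_mem_b h) (by simp)
  · rw [List.map_nil] at h; exact absurd (hbf_mem_b h) (by simp)
  · rw [List.map_nil, List.reverse_nil] at h; exact absurd (hbf_mem_b h) (by simp)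

theorem stmt1 (w : List AB) :
    GoodWord w ↔ w = [] ∨
      ∃ n e i f : ℕ, i ≤ n ∧ f ≤ n ∧ (e = 0 → n = max i f) ∧
        (w = wa i ++ npow ([b] ++ wa n) e ++ [b] ++ wa f ∨
         w = wb i ++ npow ([a] ++ wb n) e ++ [a] ++ wb f) := by
  constructor
  · intro hg
    rcases eq_or_ne w [] with rfl | hw
    · exact Or.inl rfl
    right
    by_cases hbb : [b, b] <:+: w
    · have haa : ¬ [a, a] <:+: w := fun h => hg (both_bad w h hbb)
      have hw'g : GoodWord (w.map exch) := good_exch hg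
      have hbb' : ¬ [b, b] <:+: w.map exch := by
        intro h
        apply haa
        have h2 := h.map exch
        rw [map_exch_exch] at h2
        exact h2
      by_cases hbw : b ∈ w.map exch
      · obtain ⟨n, e, i, f, h1, h2, h3, h4⟩ :=
          lemA (w.map exch).length (w.map exch) le_rfl hw'g hbw hbb'
        refine ⟨n, e, i, f, h1, h2, h3, Or.inr ?_⟩
        have hww : w = (F n e i f).map exch := by
          rw [← h4, map_exch_exch]
        rw [hww, F_map_exch]
      · have h1 : w.map exch = wa (w.map exch).length := eq_wa_of_not_b hbw
        have hwb : w = wb w.length := by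
          have h2 := congrArg (List.map exch) h1
          rw [map_exch_exch, wa_map_exch] at h2
          simpa using h2
        have hm : 1 ≤ w.length := by
          cases w
          · exact absurd rfl hw
          · simp
        refine ⟨0, w.length - 1, 0, 0, le_rfl, le_rfl, fun _ => rfl, Or.inl ?_⟩
        show w = F 0 (w.length - 1) 0 0
        have hlen : w.length - 1 + 1 = w.length := by omega
        rw [F_zero_n, hlen]
        exact hwb
    · by_cases hbw : b ∈ w
      · obtain ⟨n, e, i, f, h1, h2, h3, h4⟩ := lemA w.length w le_rfl hg hbw hbb
        exact ⟨n, e, i, f, h1, h2, h3, Or.inl h4⟩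
      · have hwa : w = wa w.length := eq_wa_of_not_b hbw
        have hm : 1 ≤ w.length := by
          cases w
          · exact absurd rfl hw
          · simp
        refine ⟨0, w.length - 1, 0, 0, le_rfl, le_rfl, fun _ => rfl, Or.inr ?_⟩
        have hF : (F 0 (w.length - 1) 0 0).map exch
            = wb 0 ++ npow ([a] ++ wb 0) (w.length - 1) ++ [a] ++ wb 0 :=
          F_map_exch 0 (w.length - 1) 0 0
        have hlen : w.length - 1 + 1 = w.length := by omega
        rw [← hF, F_zero_n, wb_map_exch, hlen]
        exact hwa
  · rintro (rfl | ⟨n, e, i, f, h1, h2, h3, (h4 | h4)⟩)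
    · exact good_nil
    · have hw : w = F n e i f := h4
      rcases Nat.eq_zero_or_pos n with rfl | hn
      · have hi : i = 0 := by omega
        have hf : f = 0 := by omega
        subst hi; subst hf
        rw [hw, F_zero_n]
        exact good_wb _
      · rw [hw]
        exact good_F hn h1 h2
    · have hw : w = (F n e i f).map exch := by rw [F_map_exch]; exact h4
      rw [hw]
      apply good_exch
      rcases Nat.eq_zero_or_pos n with rfl | hn
      · have hi : i = 0 := by omega
        have hf : f = 0 := by omega
        subst hi; subst hf
        rw [F_zero_n]
        exact good_wb _
      · exact good_F hn h1 h2


end ShuffleWqo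
end

section
/- Let h, k ≥ 2 be integers and let w = a^h b^k. For every n ≥ 1 define S_n = a^h (a^{2h} b^{2k}) (a b a^{h-1} b^{k-1})^n (a^{2h} b^{2k}) b^k. Then (S_n)_{n≥1} is a bad sequence of elements of LL(w) with respect to ⊢*_{{w}}: every S_n belongs to LL(w), and for all 1 ≤ i < j it is not the case that S_i ⊢*_{{w}} S_j. In particular, ⊢*_{{w}} is not a well quasi-order on LL(w). -/
namespace ShuffleWqo

open AB

/-- The sequence `S_n` associated with `w = a^h b^k`. -/
def S2 (h k n : ℕ) : List AB :=
  wa h ++ (wa (2*h) ++ wb (2*k)) ++ npow ([a, b] ++ wa (h-1) ++ wb (k-1)) n ++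
    (wa (2*h) ++ wb (2*k)) ++ wb k


/-! If `S_i ⊢* S_j`, then `S_j` is a shuffle of `S_i` with a word `x ∈ LL(w)`, and every prefix of
`x` has at most `k ⌊|p|_a / h⌋` letters `b`, since a `b` of a copy of `w` comes after all `h`
letters `a` of that copy. Cut `S_j` after `a^{3h} b^{2k}`. If the part of `S_i` before the cut
contains a `b`, nothing before the cut comes from `x`, and the bound then forces every block
`B = a b a^{h-1} b^{k-1}` of `S_j` to come from `S_i` alone, which is impossible as `S_j` has more
blocks. Otherwise `x` has already spent `2k` letters `b`, which keeps the first `b` of `S_i` out of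
every block, so all the letters `b` of `S_i` would have to fit into the tail `a^{2h} b^{3k}`.

Membership holds because `b ⊢ B b`, so `a^h B^n b^k ∈ LL(w)`, into which `a^{2h} b^{2k} ∈ LL(w)`
is inserted twice. -/

namespace Shuffle

variable {α : Type*} {u v w : List α}

theorem nil_left : ∀ v : List α, Shuffle [] v v
  | [] => .nil
  | _ :: v => .right (nil_left v)

theorem nil_right : ∀ u : List α, Shuffle u [] u
  | [] => .nil
  | _ :: u => .left (nil_right u)

theorem append {u₁ v₁ w₁ u₂ v₂ w₂ : List α} (h₁ : Shuffle u₁ v₁ w₁) (h₂ : Shuffle u₂ v₂ w₂) :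
    Shuffle (u₁ ++ u₂) (v₁ ++ v₂) (w₁ ++ w₂) := by
  induction h₁ with
  | nil => exact h₂
  | left _ ih => exact .left ih
  | right _ ih => exact .right ih

theorem perm (hs : Shuffle u v w) : (u ++ v).Perm w := by
  induction hs with
  | nil => exact .nil
  | left _ ih => exact ih.cons _
  | right _ ih => exact List.perm_middle.trans (ih.cons _)

theorem count_eq [BEq α] (hs : Shuffle u v w) (x : α) : w.count x = u.count x + v.count x := by
  rw [← hs.perm.count_eq, List.count_append]

theorem eq_of_right_eq_nil (hs : Shuffle u v w) (hv : v = []) : w = u := by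
  induction hs with
  | nil => rfl
  | left _ ih => rw [ih hv]
  | right _ _ => exact absurd hv (List.cons_ne_nil _ _)

theorem split {w₂ : List α} : ∀ {w₁ u v : List α}, Shuffle u v (w₁ ++ w₂) →
    ∃ u₁ u₂ v₁ v₂, u = u₁ ++ u₂ ∧ v = v₁ ++ v₂ ∧ Shuffle u₁ v₁ w₁ ∧ Shuffle u₂ v₂ w₂
  | [], u, v, hs => ⟨[], u, [], v, rfl, rfl, .nil, hs⟩
  | _ :: _, _, _, .left hs =>
    let ⟨u₁, u₂, v₁, v₂, hu, hv, h₁, h₂⟩ := split hs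
    ⟨_ :: u₁, u₂, v₁, v₂, by rw [hu]; rfl, hv, .left h₁, h₂⟩
  | _ :: _, _, _, .right hs =>
    let ⟨u₁, u₂, v₁, v₂, hu, hv, h₁, h₂⟩ := split hs
    ⟨u₁, u₂, _ :: v₁, v₂, hu, by rw [hv]; rfl, .right h₁, h₂⟩

theorem assoc {x y w' : List α} (h₁ : Shuffle v x w) (h₂ : Shuffle w y w') :
    ∃ x', Shuffle x y x' ∧ Shuffle v x' w' := by
  induction h₂ generalizing v x with
  | nil => cases h₁; exact ⟨[], .nil, .nil⟩
  | left _ ih =>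
    cases h₁ with
    | left h₁ => obtain ⟨x', hx, hv⟩ := ih h₁; exact ⟨x', hx, .left hv⟩
    | right h₁ => obtain ⟨x', hx, hv⟩ := ih h₁; exact ⟨_ :: x', .left hx, .right hv⟩
  | right _ ih => obtain ⟨x', hx, hv⟩ := ih h₁; exact ⟨_ :: x', .right hx, .right hv⟩

end Shuffle

section Closure

variable {α : Type*} {I : Set (List α)}

theorem Derives.append_context (p s : List α) {v w : List α} (hd : Derives I v w) :
    Derives I (p ++ v ++ s) (p ++ w ++ s) := by
  obtain ⟨u, hu, hs⟩ := hd
  exact ⟨u, hu, by simpa using (Shuffle.nil_right p).append (hs.append (Shuffle.nil_right s))⟩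

theorem DerivesStar.append_context (p s : List α) {v w : List α} (hd : DerivesStar I v w) :
    DerivesStar I (p ++ v ++ s) (p ++ w ++ s) := by
  unfold DerivesStar at *
  exact Relation.ReflTransGen.lift (fun l => p ++ l ++ s) (fun _ _ => Derives.append_context p s)
    _ _ hd

theorem append_mem_LL {p s y : List α} (hps : p ++ s ∈ LL I) (hy : y ∈ LL I) :
    p ++ y ++ s ∈ LL I := by
  have := hy.append_context p s
  rw [List.append_nil] at this
  exact Relation.ReflTransGen.trans hps this

theorem DerivesStar.exists_shuffle {v w : List α} (hd : DerivesStar I v w) :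
    ∃ x ∈ LL I, Shuffle v x w := by
  induction hd with
  | refl => exact ⟨[], .refl, Shuffle.nil_right _⟩
  | tail _ hstep ih =>
    obtain ⟨x, hx, hs⟩ := ih
    obtain ⟨y, hy, hs'⟩ := hstep
    obtain ⟨x', hxy, hvx⟩ := hs.assoc hs'
    exact ⟨x', Relation.ReflTransGen.tail (r := Derives I) hx ⟨y, hy, hxy⟩, hvx⟩

end Closure

theorem _root_.List.IsPrefix.count_le_of_count_lt {α : Type*} [BEq α] {q P S : List α}
    (hq : q <+: P ++ S) {x : α} (hx : P.count x < q.count x) (y : α) : P.count y ≤ q.count y := by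
  rcases List.prefix_or_prefix_of_prefix hq (List.prefix_append P S) with h | h
  · exact absurd (h.sublist.count_le x) (not_le.2 hx)
  · exact h.sublist.count_le y

theorem eq_nil_of_count_eq_zero {l : List AB} (ha : l.count a = 0) (hb : l.count b = 0) :
    l = [] := by
  rcases l with _ | ⟨_ | _, l⟩ <;> simp_all

@[simp] theorem count_a_wa (n : ℕ) : (wa n).count a = n := by simp [wa]
@[simp] theorem count_b_wa (n : ℕ) : (wa n).count b = 0 := by simp [wa, List.count_replicate]
@[simp] theorem count_a_wb (n : ℕ) : (wb n).count a = 0 := by simp [wb, List.count_replicate]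
@[simp] theorem count_b_wb (n : ℕ) : (wb n).count b = n := by simp [wb]

theorem le_count_a_of_prefix_wa_append {q S : List AB} {n : ℕ} (hq : q <+: wa n ++ S)
    (hb : 0 < q.count b) : n ≤ q.count a := by
  simpa using hq.count_le_of_count_lt (x := b) (by rwa [count_b_wa]) a

theorem count_a_ab : [a, b].count a = 1 := rfl
theorem count_b_ab : [a, b].count b = 1 := rfl

def block (h k : ℕ) : List AB := [a, b] ++ wa (h-1) ++ wb (k-1)

theorem count_a_block {h : ℕ} (k : ℕ) (hh : 1 ≤ h) : (block h k).count a = h := by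
  simp only [block, List.count_append, count_a_ab, count_a_wa, count_a_wb]
  omega

theorem count_b_block (h : ℕ) {k : ℕ} (hk : 1 ≤ k) : (block h k).count b = k := by
  simp only [block, List.count_append, count_b_ab, count_b_wa, count_b_wb]
  omega

theorem S2_eq (h k n : ℕ) :
    S2 h k n = wa (3*h) ++ wb (2*k) ++ (npow (block h k) n ++ (wa (2*h) ++ wb (3*k))) := by
  rw [show 3 * h = h + 2 * h by omega, show 3 * k = 2 * k + k by omega]
  simp only [S2, block, wa, wb, List.replicate_add, List.append_assoc]

section Membership

variable {h k : ℕ}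

theorem derives_b_block (hh : 1 ≤ h) (hk : 1 ≤ k) :
    Derives {wa h ++ wb k} [b] (block h k ++ [b]) := by
  obtain ⟨h, rfl⟩ := Nat.exists_eq_add_of_le' hh
  obtain ⟨k, rfl⟩ := Nat.exists_eq_add_of_le' hk
  refine ⟨wa (h + 1) ++ wb (k + 1), rfl, ?_⟩
  have hw : wa (h + 1) ++ wb (k + 1) = a :: (wa h ++ wb k ++ [b]) := by
    rw [wa, wb, List.replicate_succ, List.replicate_succ']; simp [wa, wb]
  have hB : block (h + 1) (k + 1) ++ [b] = a :: b :: (wa h ++ wb k ++ [b]) := by simp [block]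
  rw [hw, hB]
  exact .right (.left (Shuffle.nil_left _))

theorem derivesStar_b_npow_block (hh : 1 ≤ h) (hk : 1 ≤ k) (n : ℕ) :
    DerivesStar {wa h ++ wb k} [b] (npow (block h k) n ++ [b]) := by
  induction n with
  | zero => exact .refl
  | succ n ih =>
    have := ih.append_context (block h k) []
    unfold DerivesStar at this
    simp only [List.append_nil] at this
    exact Relation.ReflTransGen.head (derives_b_block hh hk) (by simpa [npow] using this)

theorem wa_npow_block_wb_mem_LL (hh : 1 ≤ h) (hk : 1 ≤ k) (n : ℕ) :
    wa h ++ npow (block h k) n ++ wb k ∈ LL {wa h ++ wb k} := by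
  obtain ⟨k, rfl⟩ := Nat.exists_eq_add_of_le' hk
  have hw : wa h ++ wb (k + 1) ∈ LL {wa h ++ wb (k + 1)} := .single ⟨_, rfl, Shuffle.nil_left _⟩
  have hstep := (derivesStar_b_npow_block hh hk n).append_context (wa h) (wb k)
  have e₁ : wa h ++ [b] ++ wb k = wa h ++ wb (k + 1) := by simp [wb, List.replicate_succ]
  have e₂ : wa h ++ (npow (block h (k + 1)) n ++ [b]) ++ wb k =
      wa h ++ npow (block h (k + 1)) n ++ wb (k + 1) := by simp [wb, List.replicate_succ]
  rw [e₁, e₂] at hstep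
  exact Relation.ReflTransGen.trans hw hstep

theorem S2_mem_LL (hh : 1 ≤ h) (hk : 1 ≤ k) (n : ℕ) : S2 h k n ∈ LL {wa h ++ wb k} := by
  have hw : wa h ++ wb k ∈ LL {wa h ++ wb k} := .single ⟨_, rfl, Shuffle.nil_left _⟩
  have hP : wa (2*h) ++ wb (2*k) ∈ LL {wa h ++ wb k} := by
    have e : wa (2*h) ++ wb (2*k) = wa h ++ (wa h ++ wb k) ++ wb k := by
      simp only [wa, wb, two_mul, List.replicate_add, List.append_assoc]
    rw [e]
    exact append_mem_LL hw hw
  have h₁ := append_mem_LL (by simpa using wa_npow_block_wb_mem_LL hh hk n) hP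
  have h₂ := append_mem_LL (p := wa h ++ (wa (2*h) ++ wb (2*k)) ++ npow (block h k) n)
    (by simpa using h₁) hP
  simpa [S2, block] using h₂

end Membership

def PrefixBounded (h k : ℕ) (x : List AB) : Prop :=
  ∀ p, p <+: x → p.count b ≤ k * (p.count a / h)

section Badness

variable {h k : ℕ}

theorem PrefixBounded.of_prefix {x y : List AB} (hx : PrefixBounded h k x) (hy : y <+: x) :
    PrefixBounded h k y :=
  fun p hp => hx p (hp.trans hy)

theorem PrefixBounded.shuffle (hh : 0 < h) {x y : List AB} (hx : PrefixBounded h k x)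
    (hs : Shuffle x (wa h ++ wb k) y) : PrefixBounded h k y := by
  rintro p ⟨r, rfl⟩
  obtain ⟨x₁, x₂, q, q', rfl, hq, hs₁, -⟩ := hs.split
  have hq : q <+: wa h ++ wb k := ⟨q', hq.symm⟩
  have hxb := hx x₁ (List.prefix_append _ _)
  rw [hs₁.count_eq, hs₁.count_eq]
  by_cases hb : q.count b = 0
  · rw [hb, add_zero]
    exact hxb.trans (Nat.mul_le_mul_left _ (Nat.div_le_div_right (Nat.le_add_right _ _)))
  · have hqa : q.count a = h := le_antisymm (by simpa using hq.sublist.count_le a)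
      (le_count_a_of_prefix_wa_append hq (Nat.pos_of_ne_zero hb))
    have hqb : q.count b ≤ k := by simpa using hq.sublist.count_le b
    rw [hqa, Nat.add_div_right _ hh, mul_add, mul_one]
    omega

theorem prefixBounded_of_mem_LL (hh : 0 < h) {x : List AB} (hx : x ∈ LL {wa h ++ wb k}) :
    PrefixBounded h k x := by
  induction hx with
  | refl => intro p hp; simp [List.prefix_nil.1 hp]
  | tail _ hstep ih =>
    obtain ⟨u, rfl, hs⟩ := hstep
    exact ih.shuffle hh hs

theorem count_b_pos_of_shuffle_block (hh : 2 ≤ h) {U X : List AB}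
    (hs : Shuffle U X (block h k)) (hX : PrefixBounded h k X) : 0 < U.count b := by
  obtain ⟨U₁, U₂, X₁, X₂, rfl, rfl, hs₁, -⟩ :=
    (show Shuffle U X ([a, b] ++ (wa (h-1) ++ wb (k-1))) by simpa [block] using hs).split
  have ha := hs₁.count_eq a
  have hb := hs₁.count_eq b
  have hX₁ := hX X₁ (List.prefix_append _ _)
  rw [count_a_ab] at ha
  rw [count_b_ab] at hb
  rw [Nat.div_eq_of_lt (show X₁.count a < h by omega), mul_zero] at hX₁
  rw [List.count_append]
  omega

theorem eq_nil_of_shuffle_block (hh : 2 ≤ h) (hk : 2 ≤ k) {U X R : List AB}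
    (hs : Shuffle U X (block h k)) (hX : PrefixBounded h k X) (hU : U <+: block h k ++ R) :
    X = [] := by
  have ha := hs.count_eq a
  have hb := hs.count_eq b
  rw [count_a_block k (by omega)] at ha
  rw [count_b_block h (by omega)] at hb
  have hUa₁ : 1 ≤ U.count a :=
    le_count_a_of_prefix_wa_append (S := b :: (wa (h-1) ++ wb (k-1) ++ R))
      (by simpa [block, wa] using hU) (count_b_pos_of_shuffle_block hh hs hX)
  have hXb : X.count b = 0 := by
    have := hX X (List.prefix_refl X)
    rwa [Nat.div_eq_of_lt (show X.count a < h by omega), mul_zero, Nat.le_zero] at this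
  have hUa : h ≤ U.count a := by
    have hU' : U <+: ([a, b] ++ wa (h-1)) ++ (wb (k-1) ++ R) := by simpa [block] using hU
    have := hU'.count_le_of_count_lt (x := b)
      (by rw [List.count_append, count_b_ab, count_b_wa]; omega) a
    rw [List.count_append, count_a_ab, count_a_wa] at this
    omega
  exact eq_nil_of_count_eq_zero (by omega) hXb

theorem not_shuffle_npow_block (hh : 2 ≤ h) (hk : 2 ≤ k) {T : List AB}
    (hT : ∀ q, q <+: T → 0 < q.count b → h < q.count a) :
    ∀ {i j : ℕ} {X : List AB}, i < j → PrefixBounded h k X →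
      ¬ Shuffle (npow (block h k) i ++ T) X (npow (block h k) j ++ T)
  | _, 0, _, hij, _, _ => by omega
  | i, j + 1, X, hij, hX, hs => by
    obtain ⟨U₁, U₂, X₁, X₂, hU, rfl, hs₁, hs₂⟩ :=
      (show Shuffle _ X (block h k ++ (npow (block h k) j ++ T)) by
        simpa [npow, List.append_assoc] using hs).split
    have hX₁ := hX.of_prefix (List.prefix_append _ _)
    cases i with
    | zero =>
      have hU₁ := hT U₁ ⟨U₂, by simpa [npow] using hU.symm⟩
        (count_b_pos_of_shuffle_block hh hs₁ hX₁)
      have := hs₁.count_eq a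
      rw [count_a_block k (by omega)] at this
      omega
    | succ i =>
      have hU' : block h k ++ (npow (block h k) i ++ T) = U₁ ++ U₂ := by
        simpa [npow, List.append_assoc] using hU
      obtain rfl := eq_nil_of_shuffle_block hh hk hs₁ hX₁ ⟨U₂, hU'.symm⟩
      rw [← hs₁.eq_of_right_eq_nil rfl] at hU'
      rw [← List.append_cancel_left hU'] at hs₂
      exact not_shuffle_npow_block hh hk hT (by omega) (by simpa using hX) hs₂

/-- The hypothesis on `X` says that it continues a prefix-bounded word whose first part has `c`
letters `a` and `2k` letters `b`, while `U` has at least `c` letters `a` before its first `b`: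
then no block can receive that `b`. -/
theorem not_shuffle_npow_block_of_count_b_lt (hh : 0 < h) (hk : 0 < k) {T : List AB} :
    ∀ (r : ℕ) {U X : List AB} {c : ℕ}, T.count b < U.count b →
      (∀ q, q <+: U → 0 < q.count b → c ≤ q.count a) →
      (∀ p, p <+: X → 2 * k + p.count b ≤ k * ((c + p.count a) / h)) →
      ¬ Shuffle U X (npow (block h k) r ++ T)
  | 0, U, X, c, hUb, _, _, hs => by
    have := hs.count_eq b
    simp only [npow, List.nil_append] at this
    omega
  | r + 1, U, X, c, hUb, hU, hX, hs => by
    obtain ⟨U₁, U₂, X₁, X₂, rfl, rfl, hs₁, hs₂⟩ :=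
      (show Shuffle U X (block h k ++ (npow (block h k) r ++ T)) by
        simpa [npow, List.append_assoc] using hs).split
    have ha := hs₁.count_eq a
    have hb := hs₁.count_eq b
    rw [count_a_block k hh] at ha
    rw [count_b_block h hk] at hb
    have hc : 2 * h ≤ c := by
      have := hX [] List.nil_prefix
      simp only [List.count_nil, add_zero] at this
      exact (Nat.le_div_iff_mul_le hh).1 (Nat.le_of_mul_le_mul_left (by linarith) hk)
    have hU₁b : U₁.count b = 0 := by
      by_contra hne
      have := hU U₁ (List.prefix_append _ _) (Nat.pos_of_ne_zero hne)
      omega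
    refine not_shuffle_npow_block_of_count_b_lt hh hk r (c := c - U₁.count a)
      (by rw [List.count_append] at hUb; omega) (fun q hq hqb => ?_) (fun p hp => ?_) hs₂
    · have := hU (U₁ ++ q) ((List.prefix_append_right_inj U₁).2 hq)
        (by rw [List.count_append]; omega)
      rw [List.count_append] at this
      omega
    · have := hX (X₁ ++ p) ((List.prefix_append_right_inj X₁).2 hp)
      rw [List.count_append, List.count_append,
        show c + (X₁.count a + p.count a) = c - U₁.count a + p.count a + h by omega,
        Nat.add_div_right _ hh, mul_add, mul_one] at this
      omega

theorem not_derivesStar_S2 (hh : 2 ≤ h) (hk : 2 ≤ k) {i j : ℕ} (hij : i < j) :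
    ¬ DerivesStar {wa h ++ wb k} (S2 h k i) (S2 h k j) := by
  intro hd
  obtain ⟨x, hxLL, hs⟩ := hd.exists_shuffle
  have hx := prefixBounded_of_mem_LL (by omega) hxLL
  rw [S2_eq, S2_eq] at hs
  obtain ⟨U₀, U, X₀, X, hU, rfl, hs₀, hsR⟩ := hs.split
  have hU₀ : U₀ <+: wa (3*h) ++ (wb (2*k) ++ (npow (block h k) i ++ (wa (2*h) ++ wb (3*k)))) :=
    ⟨U, by simpa using hU.symm⟩
  have ha := hs₀.count_eq a
  have hb := hs₀.count_eq b
  have hX₀ := hx X₀ (List.prefix_append _ _)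
  simp only [List.count_append, count_a_wa, count_a_wb, count_b_wa, count_b_wb] at ha hb
  by_cases hU₀b : 0 < U₀.count b
  · have := le_count_a_of_prefix_wa_append hU₀ hU₀b
    rw [show X₀.count a = 0 by omega, Nat.zero_div, mul_zero, Nat.le_zero] at hX₀
    obtain rfl := eq_nil_of_count_eq_zero (by omega) hX₀
    rw [← hs₀.eq_of_right_eq_nil rfl] at hU
    rw [← List.append_cancel_left hU] at hsR
    refine not_shuffle_npow_block hh hk (fun q hq hqb => ?_) hij (by simpa using hx) hsR
    have := le_count_a_of_prefix_wa_append hq hqb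
    omega
  · refine not_shuffle_npow_block_of_count_b_lt (by omega) (by omega) j (c := 3*h - U₀.count a)
      ?_ (fun q hq hqb => ?_) (fun p hp => ?_) hsR
    · have := congrArg (List.count b) hU
      simp only [List.append_assoc, List.count_append, count_b_wa, count_b_wb] at this ⊢
      omega
    · have hq' : U₀ ++ q <+: wa (3*h) ++ (wb (2*k) ++
          (npow (block h k) i ++ (wa (2*h) ++ wb (3*k)))) := by
        rw [← List.append_assoc, hU]
        exact (List.prefix_append_right_inj U₀).2 hq
      have := le_count_a_of_prefix_wa_append hq' (by rw [List.count_append]; omega)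
      rw [List.count_append] at this
      omega
    · have := hx (X₀ ++ p) ((List.prefix_append_right_inj X₀).2 hp)
      rwa [List.count_append, List.count_append, show X₀.count b = 2 * k by omega,
        show X₀.count a = 3 * h - U₀.count a by omega] at this

end Badness

theorem stmt2 (h k : ℕ) (hh : 2 ≤ h) (hk : 2 ≤ k) :
    (∀ n : ℕ, 1 ≤ n → S2 h k n ∈ LL {wa h ++ wb k}) ∧
    (∀ i j : ℕ, 1 ≤ i → i < j → ¬ DerivesStar {wa h ++ wb k} (S2 h k i) (S2 h k j)) ∧
    ¬ IsWqoOn (DerivesStar {wa h ++ wb k}) (LL {wa h ++ wb k}) := by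
  have hmem := S2_mem_LL (by omega : 1 ≤ h) (by omega : 1 ≤ k)
  refine ⟨fun n _ => hmem n, fun i j _ hij => not_derivesStar_S2 hh hk hij, fun hwqo => ?_⟩
  obtain ⟨i, j, hij, hd⟩ := hwqo (S2 h k) hmem
  exact not_derivesStar_S2 hh hk hij hd

end ShuffleWqo
end

section
/- Let k > ℓ ≥ 1 and m ≥ 1 be integers and let w = a^k b a^ℓ b^m. For every word u ∈ LL(w) and every non-empty prefix p of u, one has (m+1)·|p|_a ≥ (k+ℓ)·|p|_b (equivalently, the ratio |p|_a/|p|_b is at least (k+ℓ)/(m+1) whenever |p|_b > 0). -/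
namespace ShuffleWqo

open AB

lemma Shuffle.count_eq_s5 {α : Type*} [DecidableEq α] {u v w : List α} (h : Shuffle u v w)
    (x : α) : w.count x = u.count x + v.count x := by
  induction h with
  | nil => simp
  | left h ih => simp only [List.count_cons, ih]; split <;> omega
  | right h ih => simp only [List.count_cons, ih]; split <;> omega

lemma Shuffle.prefix_decomp {α : Type*} {u v w p : List α} (h : Shuffle u v w)
    (hp : p <+: w) : ∃ pu pv, pu <+: u ∧ pv <+: v ∧ Shuffle pu pv p := by
  induction h generalizing p with
  | nil =>
    rw [List.prefix_nil] at hp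
    exact ⟨[], [], List.nil_prefix, List.nil_prefix, hp ▸ Shuffle.nil⟩
  | @left x u v w h ih =>
    cases p with
    | nil => exact ⟨[], [], List.nil_prefix, List.nil_prefix, Shuffle.nil⟩
    | cons y q =>
      rw [List.cons_prefix_cons] at hp
      obtain ⟨rfl, hq⟩ := hp
      obtain ⟨pu, pv, h1, h2, h3⟩ := ih hq
      exact ⟨y :: pu, pv, List.cons_prefix_cons.mpr ⟨rfl, h1⟩, h2, Shuffle.left h3⟩
  | @right x u v w h ih =>
    cases p with
    | nil => exact ⟨[], [], List.nil_prefix, List.nil_prefix, Shuffle.nil⟩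
    | cons y q =>
      rw [List.cons_prefix_cons] at hp
      obtain ⟨rfl, hq⟩ := hp
      obtain ⟨pu, pv, h1, h2, h3⟩ := ih hq
      exact ⟨pu, y :: pv, h1, List.cons_prefix_cons.mpr ⟨rfl, h2⟩, Shuffle.right h3⟩

lemma prefix_append_cases {α : Type*} {p A B : List α} (h : p <+: A ++ B) :
    p <+: A ∨ ∃ q, p = A ++ q ∧ q <+: B := by
  induction A generalizing p with
  | nil => exact Or.inr ⟨p, rfl, h⟩
  | cons x A ih =>
    cases p with
    | nil => exact Or.inl List.nil_prefix
    | cons y q =>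
      rw [List.cons_append, List.cons_prefix_cons] at h
      obtain ⟨rfl, hq⟩ := h
      rcases ih hq with h1 | ⟨r, rfl, hr⟩
      · exact Or.inl (List.cons_prefix_cons.mpr ⟨rfl, h1⟩)
      · exact Or.inr ⟨r, rfl, hr⟩

lemma prefix_replicate {α : Type*} {p : List α} {n : ℕ} {x : α} (h : p <+: List.replicate n x) :
    ∃ j, j ≤ n ∧ p = List.replicate j x := by
  refine ⟨p.length, ?_, ?_⟩
  · simpa using h.length_le
  · exact List.eq_replicate_length.mpr fun y hy => List.eq_of_mem_replicate (h.sublist.subset hy)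

lemma key_w {k l m : ℕ} (hl : 1 ≤ l) (hlk : l < k) (hm : 1 ≤ m) {p : List AB}
    (hp : p <+: wa k ++ [b] ++ wa l ++ wb m) :
    (k + l) * p.count b ≤ (m + 1) * p.count a := by
  rcases prefix_append_cases hp with h1 | ⟨s, rfl, hs⟩
  · rcases prefix_append_cases h1 with h2 | ⟨r, rfl, hr⟩
    · rcases prefix_append_cases h2 with h3 | ⟨q, rfl, hq⟩
      · obtain ⟨j, hj, rfl⟩ := prefix_replicate (h3 : p <+: List.replicate k a)
        simp [List.count_replicate]
      · have : q = [] ∨ q = [b] := by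
          rcases hq with ⟨t, ht⟩
          cases q with
          | nil => exact Or.inl rfl
          | cons y q' => simp at ht; exact Or.inr (by simp [ht.1, ht.2.1])
        rcases this with rfl | rfl <;>
          simp [wa, List.count_append, List.count_replicate] <;> nlinarith
    · obtain ⟨j, hj, rfl⟩ := prefix_replicate (hr : r <+: List.replicate l a)
      simp [wa, List.count_append, List.count_replicate]
      nlinarith
  · obtain ⟨j, hj, rfl⟩ := prefix_replicate (hs : s <+: List.replicate m b)
    simp [wa, wb, List.count_append, List.count_replicate]
    nlinarith

theorem stmt5 (k l m : ℕ) (hl : 1 ≤ l) (hlk : l < k) (hm : 1 ≤ m)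
    (u : List AB) (hu : u ∈ LL {wa k ++ [b] ++ wa l ++ wb m})
    (p : List AB) (hp : p ≠ []) (hpref : p <+: u) :
    (k + l) * p.count b ≤ (m + 1) * p.count a := by
  have main : ∀ q : List AB, q <+: u → (k + l) * q.count b ≤ (m + 1) * q.count a := by
    clear hpref hp
    induction hu with
    | refl => intro q hq; rw [List.prefix_nil] at hq; simp [hq]
    | tail _ hstep ih =>
      obtain ⟨w', hw', hsh⟩ := hstep
      rcases hw' with rfl
      intro q hq
      obtain ⟨pv, pw, hpv, hpw, hqsh⟩ := hsh.prefix_decomp hq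
      have hc1 := hqsh.count_eq_s5 a
      have hc2 := hqsh.count_eq_s5 b
      have h1 := ih pv hpv
      have h2 := key_w hl hlk hm hpw
      rw [hc1, hc2, Nat.mul_add, Nat.mul_add]
      exact Nat.add_le_add h1 h2
  exact main p hpref

end ShuffleWqo
end

section
/- Let k > ℓ ≥ 1 and m ≥ 1 be integers, let w = a^k b a^ℓ b^m, and let u ∈ LL(w). If a^α b is a prefix of u then α ≥ k, and if a^α b b is a prefix of u then α ≥ 2k. -/
namespace ShuffleWqo

open AB

lemma shuffle_nil_right {α : Type*} {u v : List α} (h : Shuffle u v []) : u = [] ∧ v = [] := by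
  cases h; exact ⟨rfl, rfl⟩

lemma shuffle_wa : ∀ {n : ℕ} {p q : List AB}, Shuffle p q (wa n) →
    ∃ i j, i + j = n ∧ p = wa i ∧ q = wa j := by
  intro n
  induction n with
  | zero =>
    intro p q h
    obtain ⟨rfl, rfl⟩ := shuffle_nil_right h
    exact ⟨0, 0, rfl, rfl, rfl⟩
  | succ n ih =>
    intro p q h
    rw [wa_succ] at h
    cases h with
    | left h => obtain ⟨i, j, hij, rfl, rfl⟩ := ih h; exact ⟨i + 1, j, by omega, rfl, rfl⟩
    | right h => obtain ⟨i, j, hij, rfl, rfl⟩ := ih h; exact ⟨i, j + 1, by omega, rfl, rfl⟩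

lemma shuffle_one_b : ∀ {n : ℕ} {p q : List AB}, Shuffle p q (wa n ++ [b]) →
    (∃ i j, i + j = n ∧ p = wa i ∧ q = wa j ++ [b]) ∨
    (∃ i j, i + j = n ∧ p = wa i ++ [b] ∧ q = wa j) := by
  intro n
  induction n with
  | zero =>
    intro p q h
    have h' : Shuffle p q ([b] : List AB) := h
    cases h' with
    | left h'' =>
      obtain ⟨rfl, rfl⟩ := shuffle_nil_right h''
      exact Or.inr ⟨0, 0, rfl, rfl, rfl⟩
    | right h'' =>
      obtain ⟨rfl, rfl⟩ := shuffle_nil_right h''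
      exact Or.inl ⟨0, 0, rfl, rfl, rfl⟩
  | succ n ih =>
    intro p q h
    have h' : Shuffle p q (a :: (wa n ++ [b])) := h
    cases h' with
    | left h'' =>
      rcases ih h'' with ⟨i, j, hij, rfl, rfl⟩ | ⟨i, j, hij, rfl, rfl⟩
      · exact Or.inl ⟨i + 1, j, by omega, rfl, rfl⟩
      · exact Or.inr ⟨i + 1, j, by omega, rfl, rfl⟩
    | right h'' =>
      rcases ih h'' with ⟨i, j, hij, rfl, rfl⟩ | ⟨i, j, hij, rfl, rfl⟩
      · exact Or.inl ⟨i, j + 1, by omega, rfl, rfl⟩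
      · exact Or.inr ⟨i, j + 1, by omega, rfl, rfl⟩

lemma shuffle_two_b : ∀ {n : ℕ} {p q : List AB}, Shuffle p q (wa n ++ [b, b]) →
    (∃ i j, i + j = n ∧ p = wa i ∧ q = wa j ++ [b, b]) ∨
    (∃ i j, i + j = n ∧ p = wa i ++ [b] ∧ q = wa j ++ [b]) ∨
    (∃ i j, i + j = n ∧ p = wa i ++ [b, b] ∧ q = wa j) := by
  intro n
  induction n with
  | zero =>
    intro p q h
    have h' : Shuffle p q (b :: (wa 0 ++ [b])) := h
    cases h' with
    | left h'' =>
      rcases shuffle_one_b h'' with ⟨i, j, hij, rfl, rfl⟩ | ⟨i, j, hij, rfl, rfl⟩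
      · obtain ⟨rfl, rfl⟩ : i = 0 ∧ j = 0 := by omega
        exact Or.inr (Or.inl ⟨0, 0, rfl, rfl, rfl⟩)
      · obtain ⟨rfl, rfl⟩ : i = 0 ∧ j = 0 := by omega
        exact Or.inr (Or.inr ⟨0, 0, rfl, rfl, rfl⟩)
    | right h'' =>
      rcases shuffle_one_b h'' with ⟨i, j, hij, rfl, rfl⟩ | ⟨i, j, hij, rfl, rfl⟩
      · obtain ⟨rfl, rfl⟩ : i = 0 ∧ j = 0 := by omega
        exact Or.inl ⟨0, 0, rfl, rfl, rfl⟩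
      · obtain ⟨rfl, rfl⟩ : i = 0 ∧ j = 0 := by omega
        exact Or.inr (Or.inl ⟨0, 0, rfl, rfl, rfl⟩)
  | succ n ih =>
    intro p q h
    have h' : Shuffle p q (a :: (wa n ++ [b, b])) := h
    cases h' with
    | left h'' =>
      rcases ih h'' with ⟨i, j, hij, rfl, rfl⟩ | ⟨i, j, hij, rfl, rfl⟩ | ⟨i, j, hij, rfl, rfl⟩
      · exact Or.inl ⟨i + 1, j, by omega, rfl, rfl⟩
      · exact Or.inr (Or.inl ⟨i + 1, j, by omega, rfl, rfl⟩)
      · exact Or.inr (Or.inr ⟨i + 1, j, by omega, rfl, rfl⟩)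
    | right h'' =>
      rcases ih h'' with ⟨i, j, hij, rfl, rfl⟩ | ⟨i, j, hij, rfl, rfl⟩ | ⟨i, j, hij, rfl, rfl⟩
      · exact Or.inl ⟨i, j + 1, by omega, rfl, rfl⟩
      · exact Or.inr (Or.inl ⟨i, j + 1, by omega, rfl, rfl⟩)
      · exact Or.inr (Or.inr ⟨i, j + 1, by omega, rfl, rfl⟩)

lemma shuffle_prefix {α : Type*} : ∀ {u v w : List α}, Shuffle u v w →
    ∀ {p : List α}, p <+: w → ∃ p1 p2, p1 <+: u ∧ p2 <+: v ∧ Shuffle p1 p2 p := by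
  intro u v w h
  induction h with
  | nil =>
    intro p hp
    rw [List.prefix_nil] at hp
    subst hp
    exact ⟨[], [], List.prefix_refl _, List.prefix_refl _, Shuffle.nil⟩
  | left h ih =>
    intro p hp
    match p, hp with
    | [], _ => exact ⟨[], [], List.nil_prefix, List.nil_prefix, Shuffle.nil⟩
    | y :: p', hp =>
      rw [List.cons_prefix_cons] at hp
      obtain ⟨rfl, hp'⟩ := hp
      obtain ⟨p1, p2, h1, h2, hs⟩ := ih hp'
      exact ⟨_ :: p1, p2, List.cons_prefix_cons.mpr ⟨rfl, h1⟩, h2, Shuffle.left hs⟩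
  | right h ih =>
    intro p hp
    match p, hp with
    | [], _ => exact ⟨[], [], List.nil_prefix, List.nil_prefix, Shuffle.nil⟩
    | y :: p', hp =>
      rw [List.cons_prefix_cons] at hp
      obtain ⟨rfl, hp'⟩ := hp
      obtain ⟨p1, p2, h1, h2, hs⟩ := ih hp'
      exact ⟨p1, _ :: p2, h1, List.cons_prefix_cons.mpr ⟨rfl, h2⟩, Shuffle.right hs⟩

lemma rep_b_eq : ∀ (i j : ℕ) (r s : List AB), wa i ++ b :: r = wa j ++ b :: s →
    i = j ∧ r = s := by
  intro i
  induction i with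
  | zero =>
    intro j r s h
    cases j with
    | zero => simpa [wa] using h
    | succ j =>
      rw [wa_succ] at h
      simp [wa] at h
  | succ i ih =>
    intro j r s h
    cases j with
    | zero =>
      rw [wa_succ] at h
      simp [wa] at h
    | succ j =>
      rw [wa_succ, wa_succ] at h
      simp only [List.cons_append, List.cons.injEq] at h
      obtain ⟨hi, hr⟩ := ih j r s h.2
      exact ⟨by omega, hr⟩

lemma prefix_w_a {k l m j : ℕ} (h : wa j <+: wa k ++ [b] ++ wa l ++ wb m) : j ≤ k := by
  by_contra hc
  push_neg at hc
  have h1 : wa (k + 1) <+: wa j := by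
    have : wa j = wa (k + 1) ++ wa (j - (k + 1)) := by
      rw [wa, wa, wa, ← List.replicate_add]; congr 1; omega
    rw [this]; exact List.prefix_append _ _
  obtain ⟨t, ht⟩ := h1.trans h
  have : wa k ++ (a :: t) = wa k ++ (b :: (wa l ++ wb m)) := by
    have e : wa (k + 1) = wa k ++ [a] := by
      rw [wa, wa, List.replicate_succ']
    rw [e] at ht
    simpa [List.append_assoc] using ht
  have := List.append_cancel_left this
  simp at this

lemma prefix_w_b {k l m j : ℕ} (h : wa j ++ [b] <+: wa k ++ [b] ++ wa l ++ wb m) :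
    j = k := by
  obtain ⟨t, ht⟩ := h
  have h' : wa j ++ b :: t = wa k ++ b :: (wa l ++ wb m) := by
    simpa [List.append_assoc] using ht
  exact (rep_b_eq _ _ _ _ h').1

lemma prefix_w_bb {k l m j : ℕ} (hl : 1 ≤ l)
    (h : wa j ++ [b, b] <+: wa k ++ [b] ++ wa l ++ wb m) : False := by
  obtain ⟨t, ht⟩ := h
  have h' : wa j ++ b :: (b :: t) = wa k ++ b :: (wa l ++ wb m) := by
    simpa [List.append_assoc] using ht
  have h2 := (rep_b_eq _ _ _ _ h').2
  obtain ⟨l', rfl⟩ : ∃ l', l = l' + 1 := ⟨l - 1, by omega⟩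
  rw [wa_succ] at h2
  simp at h2

theorem stmt6 (k l m : ℕ) (hl : 1 ≤ l) (hlk : l < k) (hm : 1 ≤ m)
    (u : List AB) (hu : u ∈ LL {wa k ++ [b] ++ wa l ++ wb m}) :
    (∀ α : ℕ, (wa α ++ [b]) <+: u → k ≤ α) ∧
    (∀ α : ℕ, (wa α ++ [b, b]) <+: u → 2 * k ≤ α) := by
  induction hu with
  | refl =>
    constructor <;> intro α h <;> rw [List.prefix_nil] at h <;> simp at h
  | tail hstep hder ih =>
    rename_i v u'
    obtain ⟨t, ht, hs⟩ := hder
    rw [Set.mem_singleton_iff] at ht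
    subst ht
    constructor
    · intro α hpre
      obtain ⟨p1, p2, h1, h2, hsh⟩ := shuffle_prefix hs hpre
      rcases shuffle_one_b hsh with ⟨i, j, hij, rfl, rfl⟩ | ⟨i, j, hij, rfl, rfl⟩
      · have := prefix_w_b h2
        omega
      · have := ih.1 i h1
        omega
    · intro α hpre
      obtain ⟨p1, p2, h1, h2, hsh⟩ := shuffle_prefix hs hpre
      rcases shuffle_two_b hsh with ⟨i, j, hij, rfl, rfl⟩ | ⟨i, j, hij, rfl, rfl⟩ |
        ⟨i, j, hij, rfl, rfl⟩
      · exact absurd h2 (fun h => prefix_w_bb hl h)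
      · have hj := prefix_w_b h2
        have hi := ih.1 i h1
        omega
      · have := ih.2 i h1
        omega

end ShuffleWqo
end
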